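/- arXiv:1605.04590 — 4 statements merged into one kernel-verified Lean document; each statement's English description precedes it below -/
import Mathlib

section
/- In the multivariate polynomial ring MvPolynomial (Fin 2) (ZMod 3), with variables x and y, one has ∏_{v : Fin 3 → ZMod 3} (x + (v 0)·y) = x^27 − y^18·x^9. -/
/-!
Each value `a = v 0` is taken by `3 ^ 2` vectors `v`, so the product is
`(∏ a : 𝔽₃, (x + a y)) ^ 9`. Over a finite field with `q` elements, `∏ a, (x - a y)` is the
homogenization of `∏ a, (X - a) = X ^ q - X`, namely `x ^ q - y ^ (q - 1) x`. Finally
`(x ^ 3 - y ^ 2 x) ^ 9 = x ^ 27 - y ^ 18 x ^ 9` because raising to the ninth power is additive in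
characteristic `3`.
-/

open MvPolynomial

theorem Fintype.prod_pi_apply_eq_pow {ι α M : Type*} [Fintype ι] [DecidableEq ι] [Fintype α]
    [CommMonoid M] (i : ι) (f : α → M) :
    ∏ v : ι → α, f (v i) = (∏ a, f a) ^ Fintype.card ({j // j ≠ i} → α) := by
  rw [Fintype.prod_equiv (Equiv.funSplitAt i α) (fun v => f (v i)) (fun p => f p.1)
    (fun _ => rfl), Fintype.prod_prod_type]
  simp only [Finset.prod_const, Finset.card_univ, Finset.prod_pow]

theorem FiniteField.prod_X_sub_C_eq_X_pow_card_sub_X (K : Type*) [Field K] [Fintype K] :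
    ∏ a : K, (Polynomial.X - Polynomial.C a) = Polynomial.X ^ Fintype.card K - Polynomial.X := by
  have hmonic : (Polynomial.X ^ Fintype.card K - Polynomial.X : Polynomial K).Monic :=
    Polynomial.monic_X_pow_sub (by simpa using Fintype.one_lt_card)
  rw [← Polynomial.prod_multiset_X_sub_C_of_monic_of_roots_card_eq hmonic,
    roots_X_pow_card_sub_X]
  · rfl
  · rw [roots_X_pow_card_sub_X, X_pow_card_sub_X_natDegree_eq K Fintype.one_lt_card]
    rfl

theorem Polynomial.homogenize_prod_X_sub_C {R ι : Type*} [CommRing R] (s : Finset ι)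
    (a : ι → R) :
    (∏ i ∈ s, (X - C (a i))).homogenize s.card = ∏ i ∈ s, (.X 0 - .C (a i) * .X 1) := by
  simpa using homogenize_finsetProd (s := s) (p := fun i => X - C (a i)) (n := fun _ => 1)
    (fun i _ => natDegree_X_sub_C_le _)

theorem FiniteField.prod_X_zero_sub_C_mul_X_one (K : Type*) [Field K] [Fintype K] :
    ∏ a : K, (X 0 - C a * X 1 : MvPolynomial (Fin 2) K)
      = X 0 ^ Fintype.card K - X 1 ^ (Fintype.card K - 1) * X 0 := by
  rw [← Finset.card_univ, ← Polynomial.homogenize_prod_X_sub_C, prod_X_sub_C_eq_X_pow_card_sub_X,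
    Finset.card_univ, Polynomial.homogenize_sub, Polynomial.homogenize_X_pow le_rfl,
    Polynomial.homogenize_X Fintype.card_ne_zero, Nat.sub_self, pow_zero, mul_one, mul_comm]

theorem FiniteField.prod_X_zero_add_C_mul_X_one (K : Type*) [Field K] [Fintype K] :
    ∏ a : K, (X 0 + C a * X 1 : MvPolynomial (Fin 2) K)
      = X 0 ^ Fintype.card K - X 1 ^ (Fintype.card K - 1) * X 0 := by
  rw [← prod_X_zero_sub_C_mul_X_one, ← Equiv.prod_comp (Equiv.neg K)]
  simp [sub_eq_add_neg]

theorem dickson_restriction_p3 :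
    (∏ v : Fin 3 → ZMod 3,
        ((X 0 : MvPolynomial (Fin 2) (ZMod 3)) + C (v 0) * X 1))
      = (X 0) ^ 27 - (X 1) ^ 18 * (X 0) ^ 9 := by
  have hcard : Fintype.card ({j : Fin 3 // j ≠ 0} → ZMod 3) = 3 ^ 2 := rfl
  calc _ = (X 0 ^ 3 - X 1 ^ 2 * X 0 : MvPolynomial (Fin 2) (ZMod 3)) ^ 3 ^ 2 := by
        rw [Fintype.prod_pi_apply_eq_pow 0 (fun a => X 0 + C a * X 1), hcard,
          FiniteField.prod_X_zero_add_C_mul_X_one, ZMod.card]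
    _ = (X 0 ^ 3) ^ 3 ^ 2 - (X 1 ^ 2 * X 0) ^ 3 ^ 2 := sub_pow_char_pow _ _ _
    _ = _ := by ring
end

section
/- In the multivariate polynomial ring MvPolynomial (Fin 2) (ZMod 5), with variables x and y, one has ∏_{v : Fin 3 → ZMod 5} (x + (v 0)·y) = x^125 − y^100·x^25. -/
open MvPolynomial

theorem dickson_restriction_p5 :
    (∏ v : Fin 3 → ZMod 5,
        ((X 0 : MvPolynomial (Fin 2) (ZMod 5)) + C (v 0) * X 1))
      = (X 0) ^ 125 - (X 1) ^ 100 * (X 0) ^ 25 := by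
  have h5 : (5 : MvPolynomial (Fin 2) (ZMod 5)) = 0 := by
    have := CharP.cast_eq_zero (MvPolynomial (Fin 2) (ZMod 5)) 5
    exact_mod_cast this
  have key : (∏ a : ZMod 5, ((X 0 : MvPolynomial (Fin 2) (ZMod 5)) + C a * X 1))
      = (X 0) ^ 5 - (X 1) ^ 4 * X 0 := by
    rw [show (Finset.univ : Finset (ZMod 5)) = {0, 1, 2, 3, 4} from by decide]
    rw [Finset.prod_insert (by decide), Finset.prod_insert (by decide),
      Finset.prod_insert (by decide), Finset.prod_insert (by decide), Finset.prod_singleton]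
    simp only [map_zero, map_one, map_ofNat]
    linear_combination (2*(X 0:MvPolynomial (Fin 2) (ZMod 5))^4*X 1 + 7*(X 0)^3*(X 1)^2
      + 10*(X 0)^2*(X 1)^3 + 5*(X 0)*(X 1)^4) * h5
  calc (∏ v : Fin 3 → ZMod 5, ((X 0 : MvPolynomial (Fin 2) (ZMod 5)) + C (v 0) * X 1))
      = ∏ p : ZMod 5 × (Fin 2 → ZMod 5),
          ((X 0 : MvPolynomial (Fin 2) (ZMod 5)) + C p.1 * X 1) := by
        exact Fintype.prod_equiv (Fin.consEquiv fun _ : Fin 3 => ZMod 5).symm _ _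
          (fun v => by simp)
    _ = ∏ a : ZMod 5, ((X 0 : MvPolynomial (Fin 2) (ZMod 5)) + C a * X 1) ^ 25 := by
        rw [Fintype.prod_prod_type]
        refine Finset.prod_congr rfl fun a _ => ?_
        simp [Finset.prod_const]
    _ = ((X 0 : MvPolynomial (Fin 2) (ZMod 5)) ^ 5 - (X 1) ^ 4 * X 0) ^ 25 := by
        rw [Finset.prod_pow, key]
    _ = (X 0) ^ 125 - (X 1) ^ 100 * (X 0) ^ 25 := by
        haveI : Fact (Nat.Prime 5) := ⟨by norm_num⟩
        rw [show (25 : ℕ) = 5 ^ 2 from rfl,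
          sub_pow_char_pow_of_commute (p := 5) (n := 2) (Commute.all _ _)]
        ring
end

section
/- Let α : Fin 8 → ZMod 5 with α(i) ≠ 0 for some i. Then there exist natural numbers a and b with a + b ≥ 1 such that, in the polynomial ring (ZMod 5)[X], ∏_{0 ≤ i < j ≤ 7} (1 − 2·(α(i)² + α(j)²)·X² + (α(i)² − α(j)²)²·X⁴) = (1 − X²)^a · (1 + X²)^b. In particular the product is not equal to 1. -/
open Polynomial

private lemma zmod5_sq : ∀ x : ZMod 5, x ^ 2 = 0 ∨ x ^ 2 = 1 ∨ x ^ 2 = -1 := by decide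

private lemma zmod5_sq_ne : ∀ x : ZMod 5, x ≠ 0 → x ^ 2 ≠ 0 := by decide

private lemma factor_form (x y : ZMod 5) :
    ∃ a b : ℕ, ((x ≠ 0 ∨ y ≠ 0) → 1 ≤ a + b) ∧
      (1 - C (2 * (x ^ 2 + y ^ 2)) * X ^ 2 + C ((x ^ 2 - y ^ 2) ^ 2) * X ^ 4 : (ZMod 5)[X])
        = (1 - X ^ 2) ^ a * (1 + X ^ 2) ^ b := by
  rcases zmod5_sq x with hx | hx | hx <;> rcases zmod5_sq y with hy | hy | hy
  · refine ⟨0, 0, ?_, ?_⟩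
    · rintro (h | h)
      · exact absurd hx (zmod5_sq_ne x h)
      · exact absurd hy (zmod5_sq_ne y h)
    · rw [hx, hy, show (2 * ((0:ZMod 5) + 0)) = 0 by decide,
        show (((0:ZMod 5) - 0) ^ 2) = 0 by decide]
      simp
  · refine ⟨2, 0, fun _ => by omega, ?_⟩
    rw [hx, hy, show (2 * ((0:ZMod 5) + 1)) = 2 by decide,
      show (((0:ZMod 5) - 1) ^ 2) = 1 by decide]
    simp only [map_ofNat, map_one]
    ring
  · refine ⟨0, 2, fun _ => by omega, ?_⟩
    rw [hx, hy, show (2 * ((0:ZMod 5) + -1)) = -2 by decide,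
      show (((0:ZMod 5) - -1) ^ 2) = 1 by decide]
    simp only [map_neg, map_ofNat, map_one]
    ring
  · refine ⟨2, 0, fun _ => by omega, ?_⟩
    rw [hx, hy, show (2 * ((1:ZMod 5) + 0)) = 2 by decide,
      show (((1:ZMod 5) - 0) ^ 2) = 1 by decide]
    simp only [map_ofNat, map_one]
    ring
  · refine ⟨0, 1, fun _ => by omega, ?_⟩
    rw [hx, hy, show (2 * ((1:ZMod 5) + 1)) = -1 by decide,
      show (((1:ZMod 5) - 1) ^ 2) = 0 by decide]
    simp only [map_neg, map_one, map_zero]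
    ring
  · refine ⟨1, 1, fun _ => by omega, ?_⟩
    rw [hx, hy, show (2 * ((1:ZMod 5) + -1)) = 0 by decide,
      show (((1:ZMod 5) - -1) ^ 2) = -1 by decide]
    simp only [map_neg, map_one, map_zero]
    ring
  · refine ⟨0, 2, fun _ => by omega, ?_⟩
    rw [hx, hy, show (2 * ((-1:ZMod 5) + 0)) = -2 by decide,
      show (((-1:ZMod 5) - 0) ^ 2) = 1 by decide]
    simp only [map_neg, map_ofNat, map_one]
    ring
  · refine ⟨1, 1, fun _ => by omega, ?_⟩
    rw [hx, hy, show (2 * ((-1:ZMod 5) + 1)) = 0 by decide,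
      show (((-1:ZMod 5) - 1) ^ 2) = -1 by decide]
    simp only [map_neg, map_one, map_zero]
    ring
  · refine ⟨1, 0, fun _ => by omega, ?_⟩
    rw [hx, hy, show (2 * ((-1:ZMod 5) + -1)) = 1 by decide,
      show (((-1:ZMod 5) - -1) ^ 2) = 0 by decide]
    simp only [map_one, map_zero]
    ring

private lemma one_sub_X_sq_natDegree : (1 - X ^ 2 : (ZMod 5)[X]).natDegree = 2 := by
  haveI : Fact (1 < 5) := ⟨by norm_num⟩
  have h : (1 - X ^ 2 : (ZMod 5)[X]) = -(X ^ 2 - C 1) := by rw [map_one]; ring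
  rw [h, natDegree_neg, natDegree_X_pow_sub_C]

private lemma one_add_X_sq_natDegree : (1 + X ^ 2 : (ZMod 5)[X]).natDegree = 2 := by
  haveI : Fact (1 < 5) := ⟨by norm_num⟩
  have h : (1 + X ^ 2 : (ZMod 5)[X]) = X ^ 2 + C 1 := by rw [map_one]; ring
  rw [h, natDegree_X_pow_add_C]

theorem lambda2_chern_p5 (α : Fin 8 → ZMod 5) (hα : ∃ i, α i ≠ 0) :
    (∃ a b : ℕ, 1 ≤ a + b ∧
        (∏ p ∈ Finset.univ.filter (fun p : Fin 8 × Fin 8 => p.1 < p.2),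
            (1 - C (2 * ((α p.1) ^ 2 + (α p.2) ^ 2)) * X ^ 2
              + C (((α p.1) ^ 2 - (α p.2) ^ 2) ^ 2) * X ^ 4))
          = (1 - X ^ 2) ^ a * (1 + X ^ 2) ^ b)
      ∧ (∏ p ∈ Finset.univ.filter (fun p : Fin 8 × Fin 8 => p.1 < p.2),
            (1 - C (2 * ((α p.1) ^ 2 + (α p.2) ^ 2)) * X ^ 2
              + C (((α p.1) ^ 2 - (α p.2) ^ 2) ^ 2) * X ^ 4)) ≠ 1 := by
  have h := fun p : Fin 8 × Fin 8 => factor_form (α p.1) (α p.2)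
  choose A B h1 h2 using h
  set S := Finset.univ.filter (fun p : Fin 8 × Fin 8 => p.1 < p.2) with hS
  have hprod : (∏ p ∈ S,
      (1 - C (2 * ((α p.1) ^ 2 + (α p.2) ^ 2)) * X ^ 2
        + C (((α p.1) ^ 2 - (α p.2) ^ 2) ^ 2) * X ^ 4))
      = (1 - X ^ 2) ^ (∑ p ∈ S, A p) * (1 + X ^ 2) ^ (∑ p ∈ S, B p) := by
    rw [Finset.prod_congr rfl (fun p _ => h2 p), Finset.prod_mul_distrib,
      Finset.prod_pow_eq_pow_sum, Finset.prod_pow_eq_pow_sum]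
  obtain ⟨i, hi⟩ := hα
  obtain ⟨p, hpS, hp1⟩ : ∃ p ∈ S, (α p.1 ≠ 0 ∨ α p.2 ≠ 0) := by
    by_cases h0 : i = 0
    · exact ⟨(0, 1), by simp [hS], Or.inl (h0 ▸ hi)⟩
    · refine ⟨(0, i), ?_, Or.inr hi⟩
      simp only [hS, Finset.mem_filter, Finset.mem_univ, true_and]
      exact Fin.pos_of_ne_zero h0
  have hab : 1 ≤ (∑ p ∈ S, A p) + (∑ p ∈ S, B p) := by
    calc 1 ≤ A p + B p := h1 p hp1
      _ ≤ ∑ q ∈ S, (A q + B q) :=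
        Finset.single_le_sum (f := fun q => A q + B q) (fun q _ => Nat.zero_le _) hpS
      _ = _ := Finset.sum_add_distrib
  refine ⟨⟨_, _, hab, hprod⟩, ?_⟩
  rw [hprod]
  intro heq
  have h1ne : (1 - X ^ 2 : (ZMod 5)[X]) ≠ 0 := fun h => by
    have := one_sub_X_sq_natDegree
    rw [h] at this
    simp at this
  have h2ne : (1 + X ^ 2 : (ZMod 5)[X]) ≠ 0 := fun h => by
    have := one_add_X_sq_natDegree
    rw [h] at this
    simp at this
  haveI : Fact (Nat.Prime 5) := ⟨by norm_num⟩
  have hdeg := congrArg natDegree heq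
  rw [natDegree_mul (pow_ne_zero _ h1ne) (pow_ne_zero _ h2ne), natDegree_pow, natDegree_pow,
    one_sub_X_sq_natDegree, one_add_X_sq_natDegree, natDegree_one] at hdeg
  omega
end

section
/- Let α : Fin 4 → ZMod 3 with α(i) ≠ 0 for some i, let w : Fin 8 → ZMod 3, and let a, b ∈ ZMod 3. In the polynomial ring (ZMod 3)[X], set P = (∏_{i : Fin 4} (1 − α(i)²·X²)) · (∏_{k : Fin 8} (1 − w(k)²·X²)) and Q = ∏_{0 ≤ i < j ≤ 3} (1 − 2·(α(i)² + α(j)²)·X² + (α(i)² − α(j)²)²·X⁴). If P = 1 + a·X^18 and Q = 1 + b·X^18, then P^8 · Q = 1 − X^162. -/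
/-!
Evaluation at `X = 1` kills every factor `1 - x²X²` with `x ≠ 0`, since `x² = 1` in `ℤ/3`.
The hypothesis on `α` provides such a factor in `P`, and also in `Q`, whose factor for the pair
`(i, j)` splits into the factors of the weights `α i + α j` and `α i - α j`, not both zero.
Hence `1 + a = 1 + b = 0`, i.e. `P = Q = 1 - X¹⁸`, and `P⁸ Q = (1 - X¹⁸)⁹ = 1 - X¹⁶²` by the
Frobenius in characteristic `3`.
-/

open Polynomial

section CommRing

variable {R : Type*} [CommRing R]

theorem one_sub_X_pow_pow_char_pow (p : ℕ) [Fact p.Prime] [CharP R p] (m n : ℕ) :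
    (1 - X ^ m : R[X]) ^ p ^ n = 1 - X ^ (m * p ^ n) := by
  rw [sub_pow_char_pow, one_pow, pow_mul]

theorem eq_one_sub_X_pow_of_eval_one_eq_zero {P : R[X]} {c : R} {n : ℕ}
    (hP : P = 1 + C c * X ^ n) (h1 : P.eval 1 = 0) : P = 1 - X ^ n := by
  have hc : c = -1 := by
    rw [hP] at h1
    simp only [eval_add, eval_one, eval_mul, eval_C, eval_pow, eval_X, one_pow, mul_one] at h1
    linear_combination h1
  rw [hP, hc, map_neg, map_one, neg_one_mul, ← sub_eq_add_neg]

theorem one_sub_C_mul_X_sq_add_C_mul_X_pow_four_eq_mul (a b : R) :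
    (1 - C (2 * (a ^ 2 + b ^ 2)) * X ^ 2 + C ((a ^ 2 - b ^ 2) ^ 2) * X ^ 4 : R[X])
      = (1 - C (a + b) ^ 2 * X ^ 2) * (1 - C (a - b) ^ 2 * X ^ 2) := by
  simp only [map_mul, map_add, map_sub, map_pow, map_ofNat]
  ring

end CommRing

namespace ZMod

theorem sq_eq_one_of_ne_zero_three {x : ZMod 3} (hx : x ≠ 0) : x ^ 2 = 1 :=
  pow_card_sub_one_eq_one hx

theorem eval_one_one_sub_C_sq_mul_X_sq {x : ZMod 3} (hx : x ≠ 0) :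
    (1 - C x ^ 2 * X ^ 2 : (ZMod 3)[X]).eval 1 = 0 := by
  simp [sq_eq_one_of_ne_zero_three hx]

theorem eval_one_one_sub_C_mul_X_sq_add_C_mul_X_pow_four {a b : ZMod 3} (h : a ≠ 0 ∨ b ≠ 0) :
    (1 - C (2 * (a ^ 2 + b ^ 2)) * X ^ 2 + C ((a ^ 2 - b ^ 2) ^ 2) * X ^ 4 : (ZMod 3)[X]).eval 1
      = 0 := by
  have hab : a + b ≠ 0 ∨ a - b ≠ 0 := by
    revert a b
    decide
  rw [one_sub_C_mul_X_sq_add_C_mul_X_pow_four_eq_mul, eval_mul, mul_eq_zero]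
  exact hab.imp eval_one_one_sub_C_sq_mul_X_sq eval_one_one_sub_C_sq_mul_X_sq

end ZMod

theorem c162_rho8_p3 (α : Fin 4 → ZMod 3) (hα : ∃ i, α i ≠ 0)
    (w : Fin 8 → ZMod 3) (a b : ZMod 3)
    (hP : (∏ i : Fin 4, (1 - C (α i) ^ 2 * X ^ 2))
            * (∏ k : Fin 8, (1 - C (w k) ^ 2 * X ^ 2))
          = 1 + C a * X ^ 18)
    (hQ : (∏ p ∈ Finset.univ.filter (fun p : Fin 4 × Fin 4 => p.1 < p.2),
            (1 - C (2 * ((α p.1) ^ 2 + (α p.2) ^ 2)) * X ^ 2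
              + C (((α p.1) ^ 2 - (α p.2) ^ 2) ^ 2) * X ^ 4))
          = 1 + C b * X ^ 18) :
    ((∏ i : Fin 4, (1 - C (α i) ^ 2 * X ^ 2))
        * (∏ k : Fin 8, (1 - C (w k) ^ 2 * X ^ 2))) ^ 8
      * (∏ p ∈ Finset.univ.filter (fun p : Fin 4 × Fin 4 => p.1 < p.2),
          (1 - C (2 * ((α p.1) ^ 2 + (α p.2) ^ 2)) * X ^ 2
            + C (((α p.1) ^ 2 - (α p.2) ^ 2) ^ 2) * X ^ 4))
      = 1 - X ^ 162 := by
  obtain ⟨i, hi⟩ := hα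
  rw [eq_one_sub_X_pow_of_eval_one_eq_zero hP ?evalP,
    eq_one_sub_X_pow_of_eval_one_eq_zero hQ ?evalQ,
    ← pow_succ, show 8 + 1 = 3 ^ 2 by norm_num, one_sub_X_pow_pow_char_pow]
  · norm_num
  case evalP =>
    rw [eval_mul, eval_prod,
      Finset.prod_eq_zero (Finset.mem_univ i) (ZMod.eval_one_one_sub_C_sq_mul_X_sq hi), zero_mul]
  case evalQ =>
    obtain ⟨j, hji⟩ := exists_ne i
    rw [eval_prod]
    rcases hji.lt_or_gt with hji | hij
    · exact Finset.prod_eq_zero (i := (j, i)) (by simp [hji])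
        (ZMod.eval_one_one_sub_C_mul_X_sq_add_C_mul_X_pow_four (Or.inr hi))
    · exact Finset.prod_eq_zero (i := (i, j)) (by simp [hij])
        (ZMod.eval_one_one_sub_C_mul_X_sq_add_C_mul_X_pow_four (Or.inl hi))
end
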